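/- For any finite graph G = (V,E), any edge (u,v) ∈ E and any β ≥ 0, the unnormalized correlation Σ_{σ ∈ {−1,+1}^V} σ_u σ_v · exp(β Σ_{(a,b)∈E} σ_a σ_b) is non-negative (First Griffiths inequality). -/
import Mathlib


open Finset

private lemma griffiths_spin_single {V : Type*} [Fintype V] [DecidableEq V]
    (σ : V → Bool) (x : V) :
    (if σ x then (1:ℝ) else -1) =
      ∏ w : V, (if σ w then (1:ℝ) else -1) ^ (if x = w then 1 else 0) := by
  have h : ∀ w : V, (if σ w then (1:ℝ) else -1) ^ (if x = w then 1 else 0)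
       = if x = w then (if σ w then (1:ℝ) else -1) else 1 := by
    intro w; split <;> simp
  simp_rw [h]
  rw [Finset.prod_ite_eq]
  simp

private lemma griffiths_term_eq {V : Type*} [Fintype V] [DecidableEq V]
    (σ : V → Bool) (u v : V) (S : Finset (V × V)) :
    (if σ u then (1:ℝ) else -1) * (if σ v then (1:ℝ) else -1) *
      ∏ e ∈ S, (if σ e.1 then (1:ℝ) else -1) * (if σ e.2 then (1:ℝ) else -1)
    = ∏ w : V, (if σ w then (1:ℝ) else -1) ^
        ((if u = w then 1 else 0) + (if v = w then 1 else 0)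
          + ∑ e ∈ S, ((if e.1 = w then 1 else 0) + (if e.2 = w then 1 else 0))) := by
  simp_rw [pow_add, Finset.prod_mul_distrib, ← Finset.prod_pow_eq_pow_sum]
  rw [Finset.prod_comm]
  simp_rw [pow_add, Finset.prod_mul_distrib]
  rw [← griffiths_spin_single σ u, ← griffiths_spin_single σ v]
  congr 2
  · exact Finset.prod_congr rfl fun e _ => griffiths_spin_single σ e.1
  · exact Finset.prod_congr rfl fun e _ => griffiths_spin_single σ e.2

private lemma griffiths_moment_nonneg {V : Type*} [Fintype V] [DecidableEq V]
    (m : V → ℕ) :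
    0 ≤ ∑ σ : V → Bool, ∏ w, (if σ w then (1:ℝ) else -1) ^ m w := by
  have h : (∑ σ : V → Bool, ∏ w, (if σ w then (1:ℝ) else -1) ^ m w)
      = ∏ w : V, (∑ b : Bool, (if b then (1:ℝ) else -1) ^ m w) := by
    rw [Finset.prod_univ_sum, Fintype.piFinset_univ]
  rw [h]
  refine Finset.prod_nonneg fun w _ => ?_
  rcases Nat.even_or_odd (m w) with h | h
  · simp [h.neg_one_pow]
  · simp [h.neg_one_pow]

/-- First Griffiths inequality: the unnormalized two-point function is non-negative. -/
theorem griffiths_first_inequality (V : Type*) [Fintype V] [DecidableEq V]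
    (E : Finset (V × V)) (u v : V) (huv : (u, v) ∈ E) (β : ℝ) (hβ : 0 ≤ β) :
    0 ≤ ∑ σ : V → Bool,
        (if σ u then (1 : ℝ) else -1) * (if σ v then (1 : ℝ) else -1) *
          Real.exp (β * ∑ e ∈ E,
            (if σ e.1 then (1 : ℝ) else -1) * (if σ e.2 then (1 : ℝ) else -1)) := by
  have hexp : ∀ σ : V → Bool,
      Real.exp (β * ∑ e ∈ E,
          (if σ e.1 then (1:ℝ) else -1) * (if σ e.2 then (1:ℝ) else -1))
      = ∏ e ∈ E, ((if σ e.1 then (1:ℝ) else -1) * (if σ e.2 then (1:ℝ) else -1)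
            * Real.sinh β + Real.cosh β) := by
    intro σ
    rw [Finset.mul_sum, Real.exp_sum]
    refine Finset.prod_congr rfl fun e _ => ?_
    cases h1 : σ e.1 <;> cases h2 : σ e.2 <;> simp [h1, h2] <;>
      (try (have := Real.cosh_sub_sinh β; linarith))
  simp_rw [hexp, Finset.prod_add, Finset.mul_sum]
  rw [Finset.sum_comm]
  refine Finset.sum_nonneg fun S hS => ?_
  have hterm : ∀ σ : V → Bool,
      (if σ u then (1:ℝ) else -1) * (if σ v then (1:ℝ) else -1) *
        ((∏ e ∈ S, (if σ e.1 then (1:ℝ) else -1) * (if σ e.2 then (1:ℝ) else -1)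
            * Real.sinh β) * ∏ e ∈ E \ S, Real.cosh β)
      = (Real.sinh β ^ S.card * Real.cosh β ^ (E \ S).card) *
          ∏ w : V, (if σ w then (1:ℝ) else -1) ^
            ((if u = w then 1 else 0) + (if v = w then 1 else 0)
              + ∑ e ∈ S, ((if e.1 = w then 1 else 0) + (if e.2 = w then 1 else 0))) := by
    intro σ
    rw [← griffiths_term_eq σ u v S]
    rw [Finset.prod_mul_distrib, Finset.prod_const, Finset.prod_const]
    ring
  simp_rw [hterm]
  rw [← Finset.mul_sum]
  refine mul_nonneg (mul_nonneg ?_ ?_) (griffiths_moment_nonneg _)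
  · exact pow_nonneg (Real.sinh_nonneg_iff.2 hβ) _
  · exact pow_nonneg (le_of_lt (Real.cosh_pos β)) _
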